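/- Assume that (H, G₁) satisfies Condition A with constant ζ and Condition B with constant ζ for some integer ζ ≥ 1. Then P ∩ P⁻¹ = ∅: no element of G is both (H, G₁)-positive and (H, G₁)-negative. -/

import Mathlib

namespace GarsideOrder

variable {G : Type*} [Group G]

/-- `a ≤_R b` iff `b * a⁻¹ ∈ M`. -/
def leR (M : Submonoid G) (a b : G) : Prop := b * a⁻¹ ∈ M

/-- `a ≤_L b` iff `a⁻¹ * b ∈ M`. -/
def leL (M : Submonoid G) (a b : G) : Prop := a⁻¹ * b ∈ M

/-- Right divisors (in `M`) of `a`. -/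
def DivR (M : Submonoid G) (a : G) : Set G := {b : G | b ∈ M ∧ leR M b a}

/-- Left divisors (in `M`) of `a`. -/
def DivL (M : Submonoid G) (a : G) : Set G := {b : G | b ∈ M ∧ leL M b a}

/-- `a` is balanced if its sets of right and left divisors coincide. -/
def Balanced (M : Submonoid G) (a : G) : Prop := DivR M a = DivL M a

open Classical in
/-- The `N`-tail of `a`: the unique `b ∈ N` having the same right divisors lying in `N`
as `a` (w.r.t. the divisibility of the ambient monoid `M`). -/
noncomputable def tail (M N : Submonoid G) (a : G) : G :=
  if h : ∃ b : G, b ∈ N ∧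
      {c : G | c ∈ N ∧ leR M c a} = {c : G | c ∈ N ∧ leR M c b} then
    h.choose
  else 1

/-- Iterated stripping of alternating tails: first the `M₁`-tail, then the `N`-tail, etc. -/
noncomputable def strip (M M₁ N : Submonoid G) : ℕ → G → G
  | 0, a => a
  | i + 1, a =>
      strip M M₁ N i a *
        (tail M (if i % 2 = 0 then M₁ else N) (strip M M₁ N i a))⁻¹

/-- The breadth of `a`: the length of the alternating form of `a`, i.e. the least `p ≥ 1`
such that stripping alternating tails `p` times reaches `1`. -/
noncomputable def bh (M M₁ N : Submonoid G) (a : G) : ℕ :=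
  sInf {p : ℕ | 1 ≤ p ∧ strip M M₁ N p a = 1}

/-- The depth of `a`: `(bh a - 1)/2` if `bh a` is odd, `bh a / 2` if `bh a` is even;
in both cases this is `bh a / 2` with natural division. -/
noncomputable def dpt (M M₁ N : Submonoid G) (a : G) : ℕ := bh M M₁ N a / 2

/-- `a ∈ M` is unmovable if `Δ` does not right-divide it. -/
def Unmovable (M : Submonoid G) (Δ a : G) : Prop := a ∈ M ∧ ¬ leR M Δ a

/-- `α` is `(H, G₁)`-negative: its `Δ`-form is `a Δ^{-k}` with `k ≥ 1` and
`dpt a < dpt (Δ^k)`. -/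
def Negative (M M₁ N : Submonoid G) (Δ : G) (α : G) : Prop :=
  ∃ a : G, ∃ k : ℕ, Unmovable M Δ a ∧ 1 ≤ k ∧ α = a * (Δ ^ k)⁻¹ ∧
    dpt M M₁ N a < dpt M M₁ N (Δ ^ k)

/-- `α` is `(H, G₁)`-positive if `α⁻¹` is `(H, G₁)`-negative. -/
def Positive (M M₁ N : Submonoid G) (Δ : G) (α : G) : Prop :=
  Negative M M₁ N Δ α⁻¹

/-- The set `Θ` of theta elements `θ^k a₀`, `k ≥ 1`, `a₀ ∈ M₁`. -/
def thetaSet (M₁ : Submonoid G) (θ : G) : Set G :=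
  {x : G | ∃ k : ℕ, 1 ≤ k ∧ ∃ a₀ ∈ M₁, x = θ ^ k * a₀}

/-- `Θ̄ = Θ ∪ M₁`. -/
def thetaBar (M₁ : Submonoid G) (θ : G) : Set G := thetaSet M₁ θ ∪ (M₁ : Set G)

/-- Condition A with constant `ζ`: `dpt (Δ^k) = ζ k + 1` for all `k ≥ 1`. -/
def CondA (M M₁ N : Submonoid G) (Δ : G) (ζ : ℕ) : Prop :=
  ∀ k : ℕ, 1 ≤ k → dpt M M₁ N (Δ ^ k) = ζ * k + 1

/-- Condition B with constant `ζ`. -/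
def CondB (M M₁ N : Submonoid G) (Δ θ : G) (ζ : ℕ) : Prop :=
  ∀ a b c : G, ∀ t : ℤ,
    Unmovable M Δ a → Unmovable M Δ b →
    ¬(a ∈ thetaBar M₁ θ ∧ b ∈ thetaBar M₁ θ) →
    Unmovable M Δ c → a * b = c * Δ ^ t →
    ∃ ε : ℕ, ε ≤ 1 ∧
      (dpt M M₁ N c : ℤ) =
        (dpt M M₁ N a : ℤ) + (dpt M M₁ N b : ℤ) - (ζ : ℤ) * t - (ε : ℤ) ∧
      ((a ∈ thetaSet M₁ θ ∨ b ∈ thetaSet M₁ θ ∨ c ∈ M₁) → ε = 1)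

/-- A Garside structure with group of fractions the subgroup `car`. -/
structure IsGarsideOn (car : Subgroup G) (M : Submonoid G) (Δ : G) : Prop where
  M_sub : (M : Set G) ⊆ (car : Set G)
  delta_mem : Δ ∈ M
  units_trivial : ∀ x : G, x ∈ M → x⁻¹ ∈ M → x = 1
  noetherian : ∀ a ∈ M, ∃ n : ℕ, 1 ≤ n ∧ ∀ l : List G,
      (∀ x ∈ l, x ∈ M ∧ x ≠ 1) → l.prod = a → l.length ≤ n
  balanced : Balanced M Δ
  div_finite : (DivR M Δ).Finite
  div_gen_monoid : Submonoid.closure (DivR M Δ) = M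
  div_gen_group : Subgroup.closure (DivR M Δ) = car
  meet : ∀ a ∈ car, ∀ b ∈ car, ∃ c ∈ car, leR M c a ∧ leR M c b ∧
      ∀ d ∈ car, leR M d a → leR M d b → leR M d c
  join : ∀ a ∈ car, ∀ b ∈ car, ∃ c ∈ car, leR M a c ∧ leR M b c ∧
      ∀ d ∈ car, leR M a d → leR M b d → leR M c d

/-- The parabolic submonoid determined by `δ`: the submonoid generated by `Div(δ)`. -/
def parM (M : Submonoid G) (δ : G) : Submonoid G := Submonoid.closure (DivR M δ)

/-- The parabolic subgroup determined by `δ`: the subgroup generated by `Div(δ)`. -/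
def parG (M : Submonoid G) (δ : G) : Subgroup G := Subgroup.closure (DivR M δ)

/-- `δ` determines a parabolic substructure of `(G, M, Δ)`. -/
structure IsParabolic (M : Submonoid G) (Δ δ : G) : Prop where
  mem : δ ∈ M
  balanced : Balanced M δ
  div_eq : DivR M δ = DivR M Δ ∩ (parM M δ : Set G)

/-- The setting of Section 3: a Garside structure `(car, M, Δ)` together with two
parabolic substructures `(H, N, Λ)` (given by `lam`) and `(G₁, M₁, Δ₁)` (given by `δ1`),
with `N ≠ M`, `M₁ ≠ M`, `N ∪ M₁` generating `M`, `Δ` central, `Δ₁` central in `G₁`. -/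
structure Setting (G : Type*) [Group G] where
  car : Subgroup G
  M : Submonoid G
  Δ : G
  δ1 : G
  lam : G
  garside : IsGarsideOn car M Δ
  par1 : IsParabolic M Δ δ1
  parH : IsParabolic M Δ lam
  N_ne : parM M lam ≠ M
  M1_ne : parM M δ1 ≠ M
  unionGen : Submonoid.closure ((parM M lam : Set G) ∪ (parM M δ1 : Set G)) = M
  delta_central : ∀ g ∈ car, Δ * g = g * Δ
  delta1_central : ∀ g ∈ parG M δ1, δ1 * g = g * δ1

namespace Setting

variable (S : Setting G)

/-- The parabolic submonoid `M₁`. -/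
def M₁ : Submonoid G := parM S.M S.δ1

/-- The parabolic submonoid `N`. -/
def Nsub : Submonoid G := parM S.M S.lam

/-- The parabolic subgroup `G₁`. -/
def G₁ : Subgroup G := parG S.M S.δ1

/-- `θ = Δ Δ₁⁻¹`. -/
def theta : G := S.Δ * S.δ1⁻¹

/-- The set of `(H, G₁)`-negative elements. -/
def Neg : Set G := {α : G | Negative S.M S.M₁ S.Nsub S.Δ α}

/-- The set of `(H, G₁)`-positive elements. -/
def Pos : Set G := {α : G | α⁻¹ ∈ S.Neg}

/-- Condition A. -/
def condA (ζ : ℕ) : Prop := CondA S.M S.M₁ S.Nsub S.Δ ζ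

/-- Condition B. -/
def condB (ζ : ℕ) : Prop := CondB S.M S.M₁ S.Nsub S.Δ S.theta ζ

/-- `(H, G₁)` is a Dehornoy structure: `PP ⊆ P`, `G₁ P G₁ ⊆ P`, and the group is the
disjoint union of `P`, `P⁻¹` and `G₁`. -/
def IsDehornoy : Prop :=
  (∀ α ∈ S.Pos, ∀ β ∈ S.Pos, α * β ∈ S.Pos) ∧
  (∀ g₁ ∈ S.G₁, ∀ α ∈ S.Pos, ∀ g₂ ∈ S.G₁, g₁ * α * g₂ ∈ S.Pos) ∧
  (∀ α ∈ S.car, α ∈ S.Pos ∨ α ∈ S.Neg ∨ α ∈ S.G₁) ∧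
  (∀ α : G, ¬(α ∈ S.Pos ∧ α ∈ S.Neg)) ∧
  (∀ α : G, ¬(α ∈ S.Pos ∧ α ∈ S.G₁)) ∧
  (∀ α : G, ¬(α ∈ S.Neg ∧ α ∈ S.G₁))

end Setting

end GarsideOrder

/-!
If `α = a Δ⁻ᵏ` is negative and `α⁻¹ = b Δ⁻ˡ` is negative too, then `a b = Δ^(k+l)` because `Δ`
is central, and Condition A turns the two negativity conditions into
`dpt a + dpt b ≤ ζ (k + l)`. Condition B gives the reverse bound `dpt a + dpt b ≥ ζ (k + l) + 1`.
If `(a, b) ∉ Θ̄ × Θ̄`, apply it to `a b = 1 · Δ^(k+l)`: `ε = 1` because `1 ∈ M₁`.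
Otherwise Condition A excludes `Λ ∈ Θ̄` (it would force `θ ∈ N`, hence `dpt Δ ≤ 1`) and
`a, b ∈ M₁` (as `dpt (Δ^(k+l)) > 0`). Writing `b Λ = c Δᵗ` in `Δ`-form, `c ∉ Θ̄`: otherwise
`θʲ Λ = θᵖ g` with `g ∈ G₁`, and comparing right divisors of powers of `Δ₁` with those of `Δ`
puts `Λ` back in `Θ̄`. Apply Condition B to `(b, Λ)` and to `(a, c)`, where
`a c = Λ Δ^(k+l-t)`, and add.
-/

namespace GarsideOrder

variable {G : Type*} [Group G] {car : Subgroup G} {M M₁ N : Submonoid G} {Δ a b c w : G}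

theorem leR_refl (M : Submonoid G) (a : G) : leR M a a := by
  simp [leR, one_mem]

theorem leR_trans (hab : leR M a b) (hbc : leR M b c) : leR M a c := by
  have h : c * a⁻¹ = c * b⁻¹ * (b * a⁻¹) := by group
  rw [leR, h]
  exact mul_mem hbc hab

theorem leR_mul_left {x : G} (hx : x ∈ M) (a : G) : leR M a (x * a) := by
  simpa [leR] using hx

theorem Balanced.mem_divR_of_mul_eq (h : Balanced M a) (hb : b ∈ M) (hc : c ∈ M)
    (e : b * c = a) : b ∈ DivR M a := by
  rw [h]
  refine ⟨hb, ?_⟩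
  rw [leL, ← e]
  simpa using hc

theorem mem_thetaBar_iff {θ : G} :
    w ∈ thetaBar M₁ θ ↔ ∃ j : ℕ, ∃ κ ∈ M₁, w = θ ^ j * κ := by
  constructor
  · rintro (⟨j, -, κ, hκ, rfl⟩ | hw)
    · exact ⟨j, κ, hκ, rfl⟩
    · exact ⟨0, w, hw, by simp⟩
  · rintro ⟨j, κ, hκ, rfl⟩
    rcases Nat.eq_zero_or_pos j with rfl | hj
    · exact Or.inr (by simpa using hκ)
    · exact Or.inl ⟨j, hj, κ, hκ, rfl⟩

theorem dpt_le_of_strip_eq_one {p : ℕ} (hp : 1 ≤ p) (h : strip M M₁ N p a = 1) :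
    dpt M M₁ N a ≤ p / 2 :=
  Nat.div_le_div_right (Nat.sInf_le ⟨hp, h⟩)

namespace IsGarsideOn

theorem leR_antisymm (hM : IsGarsideOn car M Δ) (hab : leR M a b) (hba : leR M b a) :
    a = b :=
  mul_inv_eq_one.mp (hM.units_trivial _ hba (by simpa [leR] using hab))

theorem tail_eq (hM : IsGarsideOn car M Δ) (hb : b ∈ N)
    (hab : {c | c ∈ N ∧ leR M c a} = {c | c ∈ N ∧ leR M c b}) : tail M N a = b := by
  have hex : ∃ b, b ∈ N ∧ {c | c ∈ N ∧ leR M c a} = {c | c ∈ N ∧ leR M c b} := ⟨b, hb, hab⟩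
  rw [tail, dif_pos hex]
  obtain ⟨hmem, hchoose⟩ := hex.choose_spec
  have key : ∀ x ∈ N, leR M x hex.choose ↔ leR M x b := fun x hx => by
    simpa [hx] using Set.ext_iff.mp (hchoose.symm.trans hab) x
  exact hM.leR_antisymm ((key _ hmem).1 (leR_refl _ _)) ((key _ hb).2 (leR_refl _ _))

theorem tail_self (hM : IsGarsideOn car M Δ) (ha : a ∈ N) : tail M N a = a :=
  hM.tail_eq ha rfl

theorem dpt_eq_zero (hM : IsGarsideOn car M Δ) (ha : a ∈ M₁) : dpt M M₁ N a = 0 := by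
  have h : strip M M₁ N 1 a = 1 := by
    change a * (tail M M₁ a)⁻¹ = 1
    rw [hM.tail_self ha, mul_inv_cancel]
  simpa using dpt_le_of_strip_eq_one le_rfl h

theorem exists_forall_pow_leR_le (hM : IsGarsideOn car M Δ) (hΔ : Δ ≠ 1) (hw : w ∈ M) :
    ∃ n, ∀ t, leR M (Δ ^ t) w → t ≤ n := by
  obtain ⟨n, -, hn⟩ := hM.noetherian w hw
  refine ⟨n, fun t ht => ?_⟩
  have hΔmem : ∀ x ∈ List.replicate t Δ, x ∈ M ∧ x ≠ 1 := fun x hx => by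
    rw [List.eq_of_mem_replicate hx]
    exact ⟨hM.delta_mem, hΔ⟩
  -- `w = (w Δ⁻ᵗ) Δ ⋯ Δ` is a product of at least `t` nontrivial factors
  by_cases h1 : w * (Δ ^ t)⁻¹ = 1
  · simpa using hn _ hΔmem (by rw [List.prod_replicate, ← mul_inv_eq_one.mp h1])
  · have := hn (w * (Δ ^ t)⁻¹ :: List.replicate t Δ)
      (by
        simp only [List.mem_cons]
        rintro x (rfl | hx)
        exacts [⟨ht, h1⟩, hΔmem x hx])
      (by rw [List.prod_cons, List.prod_replicate, inv_mul_cancel_right])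
    simp only [List.length_cons, List.length_replicate] at this
    omega

theorem exists_unmovable (hM : IsGarsideOn car M Δ) (hΔ : Δ ≠ 1) (hw : w ∈ M) :
    ∃ c, ∃ t : ℕ, Unmovable M Δ c ∧ w = c * Δ ^ t := by
  classical
  obtain ⟨n, hn⟩ := hM.exists_forall_pow_leR_le hΔ hw
  have hex : ∃ t, ¬ leR M (Δ ^ t) w := ⟨n + 1, fun h => by have := hn _ h; omega⟩
  obtain ⟨s, hs⟩ : ∃ s, Nat.find hex = s + 1 :=
    Nat.exists_eq_succ_of_ne_zero fun h0 => (h0 ▸ Nat.find_spec hex) (by simpa [leR] using hw)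
  have hnot := Nat.find_spec hex
  rw [hs] at hnot
  refine ⟨w * (Δ ^ s)⁻¹, s, ⟨not_not.mp (Nat.find_min hex (by omega)), fun h => hnot ?_⟩,
    by group⟩
  simpa [leR, pow_succ', mul_assoc] using h

end IsGarsideOn

namespace Setting

variable (S : Setting G)

theorem M₁_le_M : S.M₁ ≤ S.M :=
  Submonoid.closure_le.mpr fun _ hx => hx.1

theorem M₁_le_G₁ : S.M₁ ≤ S.G₁.toSubmonoid :=
  Submonoid.closure_le.mpr fun _ hx => Subgroup.subset_closure hx

theorem G₁_le_car : S.G₁ ≤ S.car :=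
  (Subgroup.closure_le _).mpr fun _ hx => S.garside.M_sub hx.1

theorem commute_Δ {g : G} (hg : g ∈ S.M) : Commute S.Δ g :=
  S.delta_central g (S.garside.M_sub hg)

theorem commute_δ1 {g : G} (hg : g ∈ S.G₁) : Commute S.δ1 g :=
  S.delta1_central g hg

theorem δ1_mem_divR : S.δ1 ∈ DivR S.M S.δ1 :=
  ⟨S.par1.mem, leR_refl _ _⟩

theorem δ1_mem_M₁ : S.δ1 ∈ S.M₁ :=
  Submonoid.subset_closure S.δ1_mem_divR

theorem divR_δ1_subset : DivR S.M S.δ1 ⊆ DivR S.M S.Δ := by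
  intro x hx
  rw [S.par1.div_eq] at hx
  exact hx.1

theorem δ1_leR_Δ : leR S.M S.δ1 S.Δ :=
  (S.divR_δ1_subset S.δ1_mem_divR).2

theorem mem_divR_δ1 {x : G} (hx : x ∈ DivR S.M S.Δ) (hx₁ : x ∈ S.M₁) : x ∈ DivR S.M S.δ1 := by
  rw [S.par1.div_eq]
  exact ⟨hx, hx₁⟩

theorem theta_mul_δ1 : S.theta * S.δ1 = S.Δ :=
  inv_mul_cancel_right _ _

theorem theta_mem_divR : S.theta ∈ DivR S.M S.Δ :=
  S.garside.balanced.mem_divR_of_mul_eq S.δ1_leR_Δ S.par1.mem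
    S.theta_mul_δ1

theorem commute_theta {g : G} (hg : g ∈ S.G₁) : Commute S.theta g :=
  (show Commute S.Δ g from S.delta_central g (S.G₁_le_car hg)).mul_left (S.commute_δ1 hg).inv_left

theorem Δ_pow_eq (t : ℕ) : S.Δ ^ t = S.theta ^ t * S.δ1 ^ t := by
  rw [← theta_mul_δ1, (S.commute_theta (S.M₁_le_G₁ S.δ1_mem_M₁)).mul_pow]

theorem Δ_ne_one : S.Δ ≠ 1 := by
  intro h
  have hM : S.M = ⊥ := by
    rw [← S.garside.div_gen_monoid, eq_bot_iff, Submonoid.closure_le]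
    intro x hx
    exact S.garside.units_trivial x hx.1 (by simpa [leR, h] using hx.2)
  exact S.M1_ne (le_antisymm S.M₁_le_M (hM ▸ bot_le))

theorem exists_δ1_pow_mul_inv_mem_M₁ {w : G} (hw : w ∈ S.M₁) :
    ∃ r : ℕ, S.δ1 ^ r * w⁻¹ ∈ S.M₁ := by
  induction hw using Submonoid.closure_induction with
  | mem x hx =>
    refine ⟨1, Submonoid.subset_closure ?_⟩
    rw [pow_one]
    exact S.par1.balanced.mem_divR_of_mul_eq hx.2 hx.1 (inv_mul_cancel_right _ _)
  | one => exact ⟨0, by simp [one_mem]⟩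
  | mul x y hx hy ihx ihy =>
    obtain ⟨rx, hrx⟩ := ihx
    obtain ⟨ry, hry⟩ := ihy
    refine ⟨ry + rx, ?_⟩
    have hcy : Commute (S.δ1 ^ rx) y⁻¹ :=
      ((S.commute_δ1 (S.M₁_le_G₁ hy)).pow_left rx).inv_right
    have key : S.δ1 ^ (ry + rx) * (x * y)⁻¹ = S.δ1 ^ ry * y⁻¹ * (S.δ1 ^ rx * x⁻¹) := by
      rw [pow_add, mul_inv_rev, mul_assoc, ← mul_assoc (S.δ1 ^ rx), hcy.eq]
      group
    rw [key]
    exact mul_mem hry hrx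

theorem exists_δ1_pow_mul_mem_M₁ {g : G} (hg : g ∈ S.G₁) : ∃ r : ℕ, S.δ1 ^ r * g ∈ S.M₁ := by
  induction hg using Subgroup.closure_induction with
  | mem x hx => exact ⟨0, by rw [pow_zero, one_mul]; exact Submonoid.subset_closure hx⟩
  | one => exact ⟨0, by simp [one_mem]⟩
  | mul x y hx hy ihx ihy =>
    obtain ⟨rx, hrx⟩ := ihx
    obtain ⟨ry, hry⟩ := ihy
    refine ⟨rx + ry, ?_⟩
    have key : S.δ1 ^ (rx + ry) * (x * y) = S.δ1 ^ rx * x * (S.δ1 ^ ry * y) := by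
      rw [pow_add, mul_assoc, ← mul_assoc (S.δ1 ^ ry), ((S.commute_δ1 hx).pow_left ry).eq]
      group
    rw [key]
    exact mul_mem hrx hry
  | inv x hx ihx =>
    obtain ⟨rx, hrx⟩ := ihx
    obtain ⟨r, hr⟩ := S.exists_δ1_pow_mul_inv_mem_M₁ hrx
    refine ⟨r, ?_⟩
    have key : S.δ1 ^ r * x⁻¹ = S.δ1 ^ r * (S.δ1 ^ rx * x)⁻¹ * S.δ1 ^ rx := by group
    rw [key]
    exact mul_mem hr (pow_mem S.δ1_mem_M₁ rx)

theorem leR_δ1_of_leR_δ1_pow (r : ℕ) {y : G} (hy : y ∈ DivR S.M S.Δ)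
    (h : leR S.M y (S.δ1 ^ r)) : leR S.M y S.δ1 := by
  induction r generalizing y with
  | zero =>
    obtain rfl : y = 1 := S.garside.units_trivial y hy.1 (by simpa [leR] using h)
    simpa [leR] using S.par1.mem
  | succ r ih =>
    have hcar : ∀ {x}, x ∈ S.M → x ∈ S.car := fun hx => S.garside.M_sub hx
    obtain ⟨j, -, hyj, hδj, hj⟩ := S.garside.join y (hcar hy.1) S.δ1 (hcar S.par1.mem)
    have hjr : leR S.M j (S.δ1 ^ (r + 1)) :=
      hj _ (hcar (pow_mem S.par1.mem _)) h (by simpa [leR, pow_succ] using pow_mem S.par1.mem r)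
    have hjΔ : leR S.M j S.Δ :=
      hj _ (hcar S.garside.delta_mem) hy.2 S.δ1_leR_Δ
    -- the join is `w δ1` with `w ≤_R θ`; induction gives `w ≤_R δ1`, so `w δ1 ∈ Div(δ1)`,
    -- which forces `w = 1`
    obtain ⟨w, hw, rfl⟩ : ∃ w ∈ S.M, j = w * S.δ1 := ⟨j * S.δ1⁻¹, hδj, by group⟩
    have hwθ : leR S.M w S.theta := by simpa [leR, theta, mul_assoc] using hjΔ
    have hwr : leR S.M w (S.δ1 ^ r) := by simpa [leR, pow_succ, mul_assoc] using hjr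
    have hwδ : leR S.M w S.δ1 := ih ⟨hw, leR_trans hwθ S.theta_mem_divR.2⟩ hwr
    have hwδ1 : w * S.δ1 ∈ DivR S.M S.δ1 :=
      S.mem_divR_δ1 ⟨mul_mem hw S.par1.mem, hjΔ⟩
        (mul_mem (Submonoid.subset_closure ⟨hw, hwδ⟩) S.δ1_mem_M₁)
    obtain rfl : w = 1 := S.garside.units_trivial w hw (by simpa [leR] using hwδ1.2)
    simpa using hyj

theorem mem_divR_δ1_of_leR {y m : G} (hy : y ∈ DivR S.M S.Δ) (hm : m ∈ S.M₁)
    (hym : leR S.M y m) : y ∈ DivR S.M S.δ1 := by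
  obtain ⟨r, hr⟩ := S.exists_δ1_pow_mul_inv_mem_M₁ hm
  exact ⟨hy.1, S.leR_δ1_of_leR_δ1_pow r hy (leR_trans hym (S.M₁_le_M hr))⟩

theorem not_Δ_leR_δ1_pow (r : ℕ) : ¬ leR S.M S.Δ (S.δ1 ^ r) := by
  intro h
  have hΔδ : leR S.M S.Δ S.δ1 :=
    S.leR_δ1_of_leR_δ1_pow r ⟨S.garside.delta_mem, leR_refl _ _⟩ h
  have hΔ : S.Δ = S.δ1 := S.garside.leR_antisymm hΔδ S.δ1_leR_Δ
  exact S.M1_ne (by rw [parM, ← hΔ]; exact S.garside.div_gen_monoid)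

theorem one_unmovable : Unmovable S.M S.Δ 1 :=
  ⟨one_mem _, fun h => S.Δ_ne_one (S.garside.units_trivial _ S.garside.delta_mem
    (by simpa [leR] using h))⟩

theorem lam_mem_divR : S.lam ∈ DivR S.M S.Δ := by
  have h : S.lam ∈ DivR S.M S.lam := ⟨S.parH.mem, leR_refl _ _⟩
  rw [S.parH.div_eq] at h
  exact h.1

theorem lam_unmovable : Unmovable S.M S.Δ S.lam := by
  refine ⟨S.parH.mem, fun h => S.N_ne ?_⟩
  rw [parM, S.garside.leR_antisymm S.lam_mem_divR.2 h]
  exact S.garside.div_gen_monoid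

theorem lam_not_mem_M₁ : S.lam ∉ S.M₁ := by
  intro hlam
  have hdiv := S.mem_divR_δ1 S.lam_mem_divR hlam
  have hN : S.Nsub ≤ S.M₁ := Submonoid.closure_le.mpr fun x hx =>
    Submonoid.subset_closure ⟨hx.1, leR_trans hx.2 hdiv.2⟩
  have hM : S.M ≤ S.M₁ := by
    rw [← S.unionGen, Submonoid.closure_le]
    rintro x (hx | hx)
    exacts [hN hx, hx]
  exact S.M1_ne (le_antisymm S.M₁_le_M hM)

theorem tail_Δ : tail S.M S.M₁ S.Δ = S.δ1 :=
  S.garside.tail_eq S.δ1_mem_M₁ <| Set.ext fun _ => and_congr_right fun hc =>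
    ⟨fun h => (S.mem_divR_δ1 ⟨S.M₁_le_M hc, h⟩ hc).2,
      fun h => leR_trans h S.δ1_leR_Δ⟩

theorem dpt_Δ_le_one (hθ : S.theta ∈ S.Nsub) : dpt S.M S.M₁ S.Nsub S.Δ ≤ 1 := by
  have h1 : strip S.M S.M₁ S.Nsub 1 S.Δ = S.theta := by
    change S.Δ * (tail S.M S.M₁ S.Δ)⁻¹ = _
    rw [S.tail_Δ]
    rfl
  have h2 : strip S.M S.M₁ S.Nsub 2 S.Δ = 1 := by
    change strip S.M S.M₁ S.Nsub 1 S.Δ * (tail S.M S.Nsub (strip S.M S.M₁ S.Nsub 1 S.Δ))⁻¹ = 1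
    rw [h1, S.garside.tail_self hθ, mul_inv_cancel]
  simpa using dpt_le_of_strip_eq_one (by norm_num) h2

theorem theta_mem_Nsub_of_lam_mem_thetaSet (h : S.lam ∈ thetaSet S.M₁ S.theta) :
    S.theta ∈ S.Nsub := by
  obtain ⟨m, hm, κ, hκ, heq⟩ := h
  obtain ⟨n, rfl⟩ := Nat.exists_eq_add_of_le' hm
  refine Submonoid.subset_closure (S.parH.balanced.mem_divR_of_mul_eq S.theta_mem_divR.1
    (mul_mem (pow_mem S.theta_mem_divR.1 n) (S.M₁_le_M hκ)) ?_)
  rw [heq, pow_succ', mul_assoc]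

theorem mul_Δ_pow_mem_thetaBar {c : G} (hc : c ∈ thetaBar S.M₁ S.theta) (t : ℕ) :
    c * S.Δ ^ t ∈ thetaBar S.M₁ S.theta := by
  obtain ⟨j, κ, hκ, rfl⟩ := mem_thetaBar_iff.mp hc
  refine mem_thetaBar_iff.mpr ⟨j + t, S.δ1 ^ t * κ, mul_mem (pow_mem S.δ1_mem_M₁ t) hκ, ?_⟩
  rw [mul_assoc, ← ((S.commute_Δ (S.M₁_le_M hκ)).pow_left t).eq, S.Δ_pow_eq, pow_add]
  simp only [mul_assoc]

theorem lam_mem_M₁_of_theta_pow_mul_mem_G₁ (n : ℕ) (h : S.theta ^ n * S.lam ∈ S.G₁) :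
    S.lam ∈ S.M₁ := by
  obtain ⟨r, hr⟩ := S.exists_δ1_pow_mul_mem_M₁ h
  refine Submonoid.subset_closure (S.mem_divR_δ1_of_leR S.lam_mem_divR hr ?_)
  rw [← mul_assoc]
  exact leR_mul_left (mul_mem (pow_mem S.par1.mem r) (pow_mem S.theta_mem_divR.1 n)) _

theorem exists_leR_δ1_pow_of_lam_eq (n : ℕ) {g : G} (hg : g ∈ S.G₁)
    (h : S.lam = S.theta ^ (n + 1) * g) :
    ∃ r : ℕ, leR S.M (S.Δ ^ n * (S.Δ * S.lam⁻¹)) (S.δ1 ^ r) := by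
  obtain ⟨E, hw⟩ := S.exists_δ1_pow_mul_mem_M₁ hg
  refine ⟨n + 1 + E, ?_⟩
  have hδθ : Commute (S.δ1 ^ (n + 1 + E)) (S.theta ^ (n + 1)) :=
    ((S.commute_theta (S.M₁_le_G₁ S.δ1_mem_M₁)).pow_pow _ _).symm
  have hmul : S.δ1 ^ (n + 1 + E) * S.lam = S.Δ ^ (n + 1) * (S.δ1 ^ E * g) := by
    rw [h, ← mul_assoc, hδθ.eq, S.Δ_pow_eq, pow_add S.δ1]
    simp only [mul_assoc]
  have e : S.δ1 ^ (n + 1 + E) * (S.Δ ^ n * (S.Δ * S.lam⁻¹))⁻¹ =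
      S.δ1 ^ (n + 1 + E) * S.lam * (S.Δ ^ (n + 1))⁻¹ := by
    rw [pow_succ]
    group
  rw [leR, e, hmul, ((S.commute_Δ (S.M₁_le_M hw)).pow_left (n + 1)).eq, mul_inv_cancel_right]
  exact S.M₁_le_M hw

theorem lam_mem_thetaSet_of_eq_theta_pow_succ_mul (n : ℕ) {g : G} (hg : g ∈ S.G₁)
    (h : S.lam = S.theta ^ (n + 1) * g) : S.lam ∈ thetaSet S.M₁ S.theta := by
  obtain ⟨r, hr⟩ := S.exists_leR_δ1_pow_of_lam_eq n hg h
  have hc : S.Δ * S.lam⁻¹ ∈ DivR S.M S.Δ :=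
    S.garside.balanced.mem_divR_of_mul_eq S.lam_mem_divR.2 S.parH.mem (inv_mul_cancel_right _ _)
  cases n with
  | zero =>
    rw [pow_zero, one_mul] at hr
    have hcδ : leR S.M (S.Δ * S.lam⁻¹) S.δ1 := S.leR_δ1_of_leR_δ1_pow r hc hr
    refine ⟨1, le_rfl, S.δ1 * (S.Δ * S.lam⁻¹)⁻¹, Submonoid.subset_closure
      (S.par1.balanced.mem_divR_of_mul_eq hcδ hc.1 (inv_mul_cancel_right _ _)), ?_⟩
    rw [pow_one, ← mul_assoc, theta_mul_δ1, mul_inv_rev, inv_inv, ← mul_assoc,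
      (S.commute_Δ S.parH.mem).eq, mul_inv_cancel_right]
  | succ n =>
    refine absurd (leR_trans ?_ hr) (S.not_Δ_leR_δ1_pow r)
    rw [pow_succ, mul_assoc (S.Δ ^ n), (S.commute_Δ hc.1).eq, ← mul_assoc (S.Δ ^ n)]
    exact leR_mul_left (mul_mem (pow_mem S.garside.delta_mem n) hc.1) _

theorem lam_mem_thetaBar_of_mul_mem {b : G} (hb : b ∈ thetaBar S.M₁ S.theta)
    (h : b * S.lam ∈ thetaBar S.M₁ S.theta) : S.lam ∈ thetaBar S.M₁ S.theta := by
  obtain ⟨j, κ, hκ, rfl⟩ := mem_thetaBar_iff.mp hb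
  obtain ⟨p, κ', hκ', heq⟩ := mem_thetaBar_iff.mp h
  have hκG := S.M₁_le_G₁ hκ
  have hg : κ⁻¹ * κ' ∈ S.G₁ := mul_mem (inv_mem hκG) (S.M₁_le_G₁ hκ')
  have hθ : S.theta ^ j * S.lam = S.theta ^ p * (κ⁻¹ * κ') :=
    calc S.theta ^ j * S.lam = κ⁻¹ * (S.theta ^ j * κ * S.lam) := by
          rw [((S.commute_theta hκG).pow_left j).eq]; group
      _ = κ⁻¹ * (S.theta ^ p * κ') := by rw [heq]
      _ = S.theta ^ p * (κ⁻¹ * κ') := by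
          rw [← mul_assoc, ← mul_assoc, ((S.commute_theta (inv_mem hκG)).pow_left p).eq]
  rcases Nat.lt_or_ge j p with hjp | hpj
  · obtain ⟨d, rfl⟩ := Nat.exists_eq_add_of_lt hjp
    refine Or.inl (S.lam_mem_thetaSet_of_eq_theta_pow_succ_mul d hg
      (mul_left_cancel (a := S.theta ^ j) ?_))
    rw [hθ, ← mul_assoc (S.theta ^ j), ← pow_add]
    rfl
  · obtain ⟨d, rfl⟩ := Nat.exists_eq_add_of_le hpj
    have hd : S.theta ^ d * S.lam = κ⁻¹ * κ' :=
      mul_left_cancel (by rw [← mul_assoc, ← pow_add, hθ])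
    exact Or.inr (S.lam_mem_M₁_of_theta_pow_mul_mem_G₁ d (hd ▸ hg))

theorem mul_eq_Δ_pow_add {α a b : G} {k l : ℕ} (ha : a ∈ S.M) (hα : α = a * (S.Δ ^ k)⁻¹)
    (hβ : α⁻¹ = b * (S.Δ ^ l)⁻¹) : a * b = S.Δ ^ (k + l) := by
  have hb : b = α⁻¹ * S.Δ ^ l := by rw [hβ]; group
  rw [hb, hα, mul_inv_rev, inv_inv, ← mul_assoc, ← mul_assoc,
    ← ((S.commute_Δ ha).pow_left k).eq, mul_inv_cancel_right, pow_add]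

variable {ζ : ℕ} {a b : G}

theorem not_Δ_pow_mem_M₁ (hA : S.condA ζ) {n : ℕ} (hn : 1 ≤ n) : S.Δ ^ n ∉ S.M₁ := by
  intro h
  have h0 := S.garside.dpt_eq_zero (N := S.Nsub) h
  rw [hA n hn] at h0
  omega

theorem lam_not_mem_thetaBar (hA : S.condA ζ) (hζ : 1 ≤ ζ) :
    S.lam ∉ thetaBar S.M₁ S.theta := by
  rintro (h | h)
  · have hΔ := S.dpt_Δ_le_one (S.theta_mem_Nsub_of_lam_mem_thetaSet h)
    have hA1 := hA 1 le_rfl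
    rw [pow_one] at hA1
    omega
  · exact S.lam_not_mem_M₁ h

theorem le_dpt_add_dpt_of_not_mem_thetaBar (hB : S.condB ζ) (ha : Unmovable S.M S.Δ a)
    (hb : Unmovable S.M S.Δ b) (hab : ¬(a ∈ thetaBar S.M₁ S.theta ∧ b ∈ thetaBar S.M₁ S.theta))
    {n : ℕ} (h : a * b = S.Δ ^ n) :
    ζ * n + 1 ≤ dpt S.M S.M₁ S.Nsub a + dpt S.M S.M₁ S.Nsub b := by
  obtain ⟨ε, -, heq, hε⟩ := hB a b 1 n ha hb hab S.one_unmovable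
    (by rw [one_mul, zpow_natCast]; exact h)
  rw [hε (Or.inr (Or.inr (one_mem _)))] at heq
  omega

theorem le_dpt_add_dpt_of_mem_thetaBar (hB : S.condB ζ) (hlam : S.lam ∉ thetaBar S.M₁ S.theta)
    (ha : Unmovable S.M S.Δ a) (hb : Unmovable S.M S.Δ b) (hbΘ : b ∈ thetaBar S.M₁ S.theta)
    (hΘ : a ∈ thetaSet S.M₁ S.theta ∨ b ∈ thetaSet S.M₁ S.theta) {n : ℕ}
    (h : a * b = S.Δ ^ n) :
    ζ * n + 1 ≤ dpt S.M S.M₁ S.Nsub a + dpt S.M S.M₁ S.Nsub b := by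
  obtain ⟨c, t, hc, hbl⟩ := S.garside.exists_unmovable S.Δ_ne_one (mul_mem hb.1 S.parH.mem)
  have hcΘ : c ∉ thetaBar S.M₁ S.theta := fun hc' =>
    hlam (S.lam_mem_thetaBar_of_mul_mem hbΘ (hbl ▸ S.mul_Δ_pow_mem_thetaBar hc' t))
  have hac : a * c = S.lam * S.Δ ^ ((n : ℤ) - t) :=
    calc a * c = a * b * S.lam * (S.Δ ^ t)⁻¹ := by rw [mul_assoc a, hbl]; group
      _ = S.lam * S.Δ ^ ((n : ℤ) - t) := by
        rw [h, ((S.commute_Δ S.parH.mem).pow_left n).eq, zpow_sub, zpow_natCast, zpow_natCast,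
          mul_assoc]
  -- adding the two instances of Condition B, the depths of `c` and `Λ` cancel
  obtain ⟨ε₁, -, h₁, hε₁⟩ := hB b S.lam c t hb S.lam_unmovable (fun h => hlam h.2) hc
    (by rw [zpow_natCast]; exact hbl)
  obtain ⟨ε₂, -, h₂, hε₂⟩ := hB a c S.lam (n - t) ha hc (fun h => hcΘ h.2) S.lam_unmovable hac
  have hε : 1 ≤ ε₁ + ε₂ := by
    rcases hΘ with hΘ | hΘ
    · rw [hε₂ (Or.inl hΘ)]; omega
    · rw [hε₁ (Or.inl hΘ)]; omega
  rw [mul_sub] at h₂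
  omega

theorem le_dpt_add_dpt (hA : S.condA ζ) (hζ : 1 ≤ ζ) (hB : S.condB ζ)
    (ha : Unmovable S.M S.Δ a) (hb : Unmovable S.M S.Δ b) {n : ℕ} (hn : 1 ≤ n)
    (h : a * b = S.Δ ^ n) :
    ζ * n + 1 ≤ dpt S.M S.M₁ S.Nsub a + dpt S.M S.M₁ S.Nsub b := by
  by_cases hab : a ∈ thetaBar S.M₁ S.theta ∧ b ∈ thetaBar S.M₁ S.theta
  · refine S.le_dpt_add_dpt_of_mem_thetaBar hB (S.lam_not_mem_thetaBar hA hζ) ha hb hab.2 ?_ h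
    obtain ⟨ha' | ha', hb' | hb'⟩ := hab
    · exact Or.inl ha'
    · exact Or.inl ha'
    · exact Or.inr hb'
    · exact absurd (h ▸ mul_mem ha' hb') (S.not_Δ_pow_mem_M₁ hA hn)
  · exact S.le_dpt_add_dpt_of_not_mem_thetaBar hB ha hb hab h

end Setting

end GarsideOrder

open GarsideOrder in
theorem statement7_general {G : Type*} [Group G] (S : Setting G)
    (ζ : ℕ) (hζ : 1 ≤ ζ) (hA : S.condA ζ) (hB : S.condB ζ) :
    ∀ α : G, ¬(α ∈ S.Pos ∧ α ∈ S.Neg) := by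
  rintro α ⟨⟨b, l, hb, hl, hβ, hdb⟩, ⟨a, k, ha, hk, hα, hda⟩⟩
  have hsum := S.le_dpt_add_dpt hA hζ hB ha hb (by omega) (S.mul_eq_Δ_pow_add ha.1 hα hβ)
  rw [hA k hk] at hda
  rw [hA l hl] at hdb
  rw [mul_add] at hsum
  omega

open GarsideOrder in
/-- Assuming Conditions A and B with constant `ζ ≥ 1`, no element of `G` is both
`(H, G₁)`-positive and `(H, G₁)`-negative. -/
theorem statement7 {G : Type*} [Group G] (S : Setting G) (hcar : S.car = ⊤)
    (ζ : ℕ) (hζ : 1 ≤ ζ) (hA : S.condA ζ) (hB : S.condB ζ) :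
    ∀ α : G, ¬(α ∈ S.Pos ∧ α ∈ S.Neg) :=
  statement7_general S ζ hζ hA hB
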